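/- Let 0 < ε < 1, ρ > 0, ρ* = (1 + ε/2)ρ, μ ≤ ερ/6, and let d° satisfy (1−ε/6)d ≤ d° ≤ (1+ε/6)d. For curves P, Q in a metric space, if the perceived discrete Fréchet distance D_F°(P^μ, Q) ≤ ρ*, then D_F(P, Q) ≤ (1+ε)ρ. -/

import Mathlib

open scoped BigOperators

namespace Frechet

variable {X : Type*}

/-- A single step of a monotone discrete walk: each coordinate increases by 0 or 1,
and not both stay the same. -/
def IsStep (a b : ℕ × ℕ) : Prop :=
  (b.1 = a.1 ∨ b.1 = a.1 + 1) ∧ (b.2 = a.2 ∨ b.2 = a.2 + 1) ∧ b ≠ a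

/-- A monotone discrete walk from (0,0) to (n-1, m-1) in the n × m lattice
(0-indexed version of a walk from (1,1) to (n,m)). -/
def IsWalk (n m : ℕ) (F : List (ℕ × ℕ)) : Prop :=
  F ≠ [] ∧ F.head? = some (0, 0) ∧ F.getLast? = some (n - 1, m - 1) ∧
    F.Chain' IsStep ∧ ∀ p ∈ F, p.1 < n ∧ p.2 < m

/-- Cost of a walk: the maximum matched distance along it. -/
def walkCost (d : X → X → ℝ) (P Q : ℕ → X) (F : List (ℕ × ℕ)) : ℝ :=
  (F.map fun p => d (P p.1) (Q p.2)).foldr max 0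

/-- Discrete Fréchet distance between `P` (first `n` points) and `Q` (first `m` points),
computed with respect to the distance-like function `d`. -/
noncomputable def dF (d : X → X → ℝ) (P : ℕ → X) (n : ℕ) (Q : ℕ → X) (m : ℕ) : ℝ :=
  sInf {c | ∃ F, IsWalk n m F ∧ walkCost d P Q F = c}

/-- Arc length of the polygonal curve `P` between vertex indices `i` and `j`. -/
def arcLen (d : X → X → ℝ) (P : ℕ → X) (i j : ℕ) : ℝ :=
  ∑ k ∈ Finset.Ico i j, d (P k) (P (k + 1))

/-- `S` is the list of indices of the greedy `μ`-simplification of the curve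
`P` with `n` vertices: it starts at vertex `0`, after a vertex `a` the next chosen
vertex `b` is the first one with arc length `> μ` (unless `b` is the final vertex
`n-1`, which is always appended), and it ends at vertex `n-1`. -/
def IsSimplification (d : X → X → ℝ) (P : ℕ → X) (n : ℕ) (μ : ℝ) (S : List ℕ) : Prop :=
  S.head? = some 0 ∧ S.getLast? = some (n - 1) ∧ S.Pairwise (· < ·) ∧
    (∀ a ∈ S, a < n) ∧
    S.Chain' (fun a b =>
      (∀ j, a < j → j < b → arcLen d P a j ≤ μ) ∧ (b = n - 1 ∨ μ < arcLen d P a b))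

/-- The subsequence of `P` selected by the index list `S`, as a curve. -/
def subCurve (P : ℕ → X) (S : List ℕ) : ℕ → X :=
  fun t => P (S.getD t 0)

/-- Discrete c-packedness of the polygonal curve `P` (first `n` vertices): for every
ball, the total length of the edges of `P` contained in the ball is at most `c`
times the radius. -/
def CPacked (d : X → X → ℝ) (P : ℕ → X) (n : ℕ) (c : ℝ) : Prop :=
  ∀ (x : X) (r : ℝ), 0 ≤ r →
    ∑ k ∈ Finset.range (n - 1),
      (if d (P k) x ≤ r ∧ d (P (k + 1)) x ≤ r then d (P k) (P (k + 1)) else 0) ≤ c * r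

/-- Directed discrete Hausdorff distance from `P` (first `n` points) to `Q`
(first `m` points). -/
noncomputable def dirHaus (d : X → X → ℝ) (P : ℕ → X) (n : ℕ) (Q : ℕ → X) (m : ℕ) : ℝ :=
  sSup {r | ∃ i < n, r = sInf {s | ∃ j < m, s = d (P i) (Q j)}}

/-- Discrete (symmetric) Hausdorff distance. -/
noncomputable def dHaus (d : X → X → ℝ) (P : ℕ → X) (n : ℕ) (Q : ℕ → X) (m : ℕ) : ℝ :=
  max (dirHaus d P n Q m) (dirHaus d Q m P n)

/-! Take a perceived walk on `P^μ × Q` of cost below `(1 - ε/6)((1 + ε)ρ - μ)`, a bound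
exceeding `ρ*` because `ε < 1`; its matched pairs are within `(1 + ε)ρ - μ` for `d`. In each
step that advances along `P^μ`, run through the skipped vertices of `P`: they lie within arc
length `μ` of the vertex of `P^μ` they follow, so the resulting walk on `P × Q` costs at most
`(1 + ε)ρ`. -/

section WalkCost

variable (d : X → X → ℝ) (P Q : ℕ → X) {F : List (ℕ × ℕ)}

lemma walkCost_nonneg (F : List (ℕ × ℕ)) : 0 ≤ walkCost d P Q F := by
  induction F with
  | nil => simp [walkCost]
  | cons a F ih => exact ih.trans (le_max_right _ _)

lemma le_walkCost {p : ℕ × ℕ} (hp : p ∈ F) : d (P p.1) (Q p.2) ≤ walkCost d P Q F := by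
  induction F with
  | nil => simp at hp
  | cons a F ih =>
    rcases List.mem_cons.mp hp with rfl | hp
    · exact le_max_left _ _
    · exact (ih hp).trans (le_max_right _ _)

lemma walkCost_le {B : ℝ} (hB : 0 ≤ B) (h : ∀ p ∈ F, d (P p.1) (Q p.2) ≤ B) :
    walkCost d P Q F ≤ B := by
  induction F with
  | nil => simpa [walkCost]
  | cons a F ih => exact max_le (h a (by simp)) (ih fun p hp => h p (by simp [hp]))

end WalkCost

section Walks

variable {n m : ℕ}

lemma isChain_map_range'_isStep (f : ℕ → ℕ × ℕ) (hf : ∀ k, IsStep (f k) (f (k + 1)))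
    (s len : ℕ) : (List.map f (List.range' s len)).IsChain IsStep :=
  (List.isChain_map f).2 <| (List.isChain_range' s len 1).imp fun k _ h => by rw [h]; exact hf k

lemma exists_isWalk (hn : 0 < n) (hm : 0 < m) : ∃ F, IsWalk n m F := by
  obtain ⟨a, rfl⟩ : ∃ a, n = a + 1 := ⟨n - 1, by omega⟩
  obtain ⟨b, rfl⟩ : ∃ b, m = b + 1 := ⟨m - 1, by omega⟩
  have right : ∀ k, IsStep (k, 0) (k + 1, 0) := fun k => ⟨Or.inr rfl, Or.inl rfl, by simp⟩
  have up : ∀ j, IsStep (a, j) (a, j + 1) := fun j => ⟨Or.inl rfl, Or.inr rfl, by simp⟩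
  refine ⟨(List.range' 0 (a + 1)).map (·, 0) ++ (List.range' 1 b).map (a, ·),
    by simp, by simp [List.range'_succ], ?_, ?_, ?_⟩
  · rcases Nat.eq_zero_or_pos b with rfl | hb
    · simp [List.getLast?_range']
    · rw [List.getLast?_append_of_ne_nil _ (by simp; omega)]
      simp [List.getLast?_range', hb.ne']
  · refine List.isChain_append.2 ⟨isChain_map_range'_isStep _ right _ _,
      isChain_map_range'_isStep _ up _ _, fun x hx y hy => ?_⟩
    obtain ⟨b, rfl⟩ : ∃ b', b = b' + 1 := ⟨b - 1, by cases b <;> simp_all⟩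
    simp only [List.getLast?_map, List.getLast?_range', Nat.add_eq_zero_iff, one_ne_zero,
      and_false, if_false, zero_add, add_tsub_cancel_right, Option.map_some, Option.mem_def,
      Option.some.injEq] at hx
    simp only [List.range'_succ, List.map_cons, List.head?_cons, Option.mem_def,
      Option.some_inj] at hy
    subst hx hy
    simpa using up 0
  · simp only [List.mem_append, List.mem_map, List.mem_range'_1]
    rintro p (⟨k, hk, rfl⟩ | ⟨k, hk, rfl⟩) <;> simp <;> omega

lemma dF_le_walkCost (d : X → X → ℝ) (P Q : ℕ → X) {F : List (ℕ × ℕ)} (hF : IsWalk n m F) :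
    dF d P n Q m ≤ walkCost d P Q F :=
  csInf_le ⟨0, by rintro _ ⟨F, -, rfl⟩; exact walkCost_nonneg d P Q F⟩ ⟨F, hF, rfl⟩

lemma exists_isWalk_walkCost_lt_of_dF_lt {d : X → X → ℝ} {P Q : ℕ → X} {B : ℝ}
    (hn : 0 < n) (hm : 0 < m) (h : dF d P n Q m < B) :
    ∃ F, IsWalk n m F ∧ walkCost d P Q F < B := by
  obtain ⟨F, hF⟩ := exists_isWalk hn hm
  obtain ⟨_, ⟨F, hF, rfl⟩, hlt⟩ := exists_lt_of_csInf_lt (by exact ⟨_, F, hF, rfl⟩) h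
  exact ⟨F, hF, hlt⟩

end Walks

/-- Lifts a walk on the vertices `idx 0 < ⋯ < idx (L-1)` of a curve to a walk on the whole curve:
a step from `i` to `i + 1` in the first coordinate becomes the run `idx i, …, idx (i+1) - 1`,
any other step keeps only `idx i`. -/
def liftWalk (idx : ℕ → ℕ) : List (ℕ × ℕ) → List (ℕ × ℕ)
  | [] => []
  | [a] => [(idx a.1, a.2)]
  | a :: b :: l =>
    (List.range' (idx a.1) (max (idx b.1 - idx a.1) 1)).map (·, a.2) ++ liftWalk idx (b :: l)

section LiftWalk

variable (idx : ℕ → ℕ)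

lemma liftWalk_ne_nil : ∀ {F : List (ℕ × ℕ)}, F ≠ [] → liftWalk idx F ≠ []
  | [a], _ => by simp [liftWalk]
  | a :: b :: l, _ => by simp [liftWalk]

lemma head?_liftWalk :
    ∀ F : List (ℕ × ℕ), (liftWalk idx F).head? = F.head?.map fun a => (idx a.1, a.2)
  | [] => rfl
  | [a] => rfl
  | a :: b :: l => by
    obtain ⟨k, hk⟩ : ∃ k, max (idx b.1 - idx a.1) 1 = k + 1 := ⟨_, (Nat.sub_add_cancel
      (le_max_right _ 1)).symm⟩
    simp [liftWalk, hk, List.range'_succ]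

lemma getLast?_liftWalk :
    ∀ F : List (ℕ × ℕ), (liftWalk idx F).getLast? = F.getLast?.map fun a => (idx a.1, a.2)
  | [] => rfl
  | [a] => rfl
  | a :: b :: l => by
    rw [liftWalk, List.getLast?_append_of_ne_nil _ (liftWalk_ne_nil idx (List.cons_ne_nil b l)),
      getLast?_liftWalk (b :: l), List.getLast?_cons_cons]

variable {idx} {L : ℕ}

lemma isChain_liftWalk (hmono : ∀ i, i + 1 < L → idx i < idx (i + 1)) :
    ∀ {F : List (ℕ × ℕ)}, F.IsChain IsStep → (∀ p ∈ F, p.1 < L) →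
      (liftWalk idx F).IsChain IsStep
  | [], _, _ => by simp [liftWalk]
  | [a], _, _ => by simp [liftWalk]
  | a :: b :: l, hF, hL => by
    obtain ⟨⟨hb1 | hb1, hb2, hne⟩, hF⟩ := List.isChain_cons_cons.1 hF
    all_goals
      refine List.isChain_append.2 ⟨isChain_map_range'_isStep _
        (fun k => ⟨Or.inr rfl, Or.inl rfl, by simp⟩) _ _,
        isChain_liftWalk hmono hF fun p hp => hL p (by simp [hp]), fun x hx y hy => ?_⟩
      simp only [List.getLast?_map, List.getLast?_range', Nat.max_eq_zero_iff, one_ne_zero,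
        and_false, if_false, Option.map_some, Option.mem_def, Option.some_inj] at hx
      rw [head?_liftWalk, List.head?_cons, Option.map_some, Option.mem_def,
        Option.some_inj] at hy
      subst hx hy
    · have : b.2 = a.2 + 1 := hb2.resolve_left fun h => hne (Prod.ext hb1 h)
      refine ⟨Or.inl ?_, Or.inr this, by simp [this]⟩
      simp [hb1]
    · have : idx a.1 < idx b.1 := hb1 ▸ hmono a.1 (hb1 ▸ hL b (by simp))
      refine ⟨Or.inr (by omega), by simpa using hb2, ?_⟩
      simp only [ne_eq, Prod.mk.injEq, not_and]
      omega

lemma exists_of_mem_liftWalk (hmono : ∀ i, i + 1 < L → idx i < idx (i + 1)) :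
    ∀ {F : List (ℕ × ℕ)} {q : ℕ × ℕ}, F.IsChain IsStep → (∀ p ∈ F, p.1 < L) →
      q ∈ liftWalk idx F →
      ∃ a ∈ F, q.2 = a.2 ∧ (q.1 = idx a.1 ∨ a.1 + 1 < L ∧ idx a.1 < q.1 ∧ q.1 < idx (a.1 + 1))
  | [a], q, _, _, hq => by
    simp only [liftWalk, List.mem_singleton] at hq
    exact ⟨a, by simp, by simp [hq], Or.inl (by simp [hq])⟩
  | a :: b :: l, q, hF, hL, hq => by
    obtain ⟨⟨hb1 | hb1, -⟩, hF⟩ := List.isChain_cons_cons.1 hF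
    all_goals
      rcases List.mem_append.1 hq with hq | hq
      swap
      · obtain ⟨c, hc, h⟩ :=
          exists_of_mem_liftWalk hmono hF (fun p hp => hL p (by simp [hp])) hq
        exact ⟨c, by simp [hc], h⟩
      obtain ⟨k, hk, rfl⟩ := List.mem_map.1 hq
      rw [List.mem_range'_1] at hk
      refine ⟨a, by simp, rfl, ?_⟩
    · exact Or.inl (by simp only [hb1] at hk; omega)
    · have hbL : a.1 + 1 < L := hb1 ▸ hL b (by simp)
      have := hmono a.1 hbL
      rw [hb1] at hk
      omega

lemma isWalk_liftWalk {n m : ℕ} {F : List (ℕ × ℕ)}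
    (hmono : ∀ i, i + 1 < L → idx i < idx (i + 1)) (h0 : idx 0 = 0)
    (hlast : idx (L - 1) = n - 1) (hlt : ∀ i < L, idx i < n) (hF : IsWalk L m F) :
    IsWalk n m (liftWalk idx F) := by
  obtain ⟨hne, hhead, hlast', hchain, hbound⟩ := hF
  have hL : ∀ p ∈ F, p.1 < L := fun p hp => (hbound p hp).1
  refine ⟨liftWalk_ne_nil idx hne, by simp [head?_liftWalk, hhead, h0],
    by simp [getLast?_liftWalk, hlast', hlast], isChain_liftWalk hmono hchain hL, fun q hq => ?_⟩
  obtain ⟨a, ha, h2, h1⟩ := exists_of_mem_liftWalk hmono hchain hL hq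
  refine ⟨?_, h2 ▸ (hbound a ha).2⟩
  rcases h1 with h1 | ⟨hi, -, h1⟩
  · exact h1 ▸ hlt _ (hL a ha)
  · exact h1.trans (hlt _ hi)

end LiftWalk

namespace IsSimplification

variable {d : X → X → ℝ} {P : ℕ → X} {n : ℕ} {μ : ℝ} {S : List ℕ}

lemma ne_nil (hS : IsSimplification d P n μ S) : S ≠ [] := by
  rintro rfl
  simp [IsSimplification] at hS

lemma getD_zero (hS : IsSimplification d P n μ S) : S.getD 0 0 = 0 := by
  cases S with
  | nil => exact absurd rfl hS.ne_nil
  | cons a S => simpa using hS.1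

lemma getD_length_sub_one (hS : IsSimplification d P n μ S) :
    S.getD (S.length - 1) 0 = n - 1 := by
  have hlast := hS.2.1
  rw [List.getLast?_eq_some_getLast hS.ne_nil, Option.some_inj, List.getLast_eq_getElem] at hlast
  rw [List.getD_eq_getElem _ _ (by simp [List.length_pos_iff.2 hS.ne_nil]), hlast]

lemma getD_lt (hS : IsSimplification d P n μ S) {i : ℕ} (hi : i < S.length) :
    S.getD i 0 < n := by
  obtain ⟨-, -, -, hbound, -⟩ := hS
  rw [List.getD_eq_getElem _ _ hi]
  exact hbound _ (List.getElem_mem hi)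

lemma getD_lt_getD_succ (hS : IsSimplification d P n μ S) {i : ℕ} (hi : i + 1 < S.length) :
    S.getD i 0 < S.getD (i + 1) 0 := by
  obtain ⟨-, -, hsorted, -, -⟩ := hS
  rw [List.getD_eq_getElem _ _ hi, List.getD_eq_getElem _ _ (by omega)]
  exact List.pairwise_iff_getElem.1 hsorted i (i + 1) _ _ (Nat.lt_succ_self i)

lemma dist_le [PseudoMetricSpace X] (hS : IsSimplification dist P n μ S) {i j : ℕ}
    (hi : i + 1 < S.length) (hij : S.getD i 0 < j) (hji : j < S.getD (i + 1) 0) :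
    dist (P (S.getD i 0)) (P j) ≤ μ := by
  rw [List.getD_eq_getElem _ _ (by omega : i < S.length)] at hij ⊢
  rw [List.getD_eq_getElem _ _ hi] at hji
  obtain ⟨-, -, -, -, hchain⟩ := hS
  exact (dist_le_Ico_sum_dist P hij.le).trans ((hchain.getElem i hi).1 j hij hji)

end IsSimplification

/-- Every vertex of `P` lies within `μ` of its predecessor in `P^μ`, so lifting a walk on
`P^μ × Q` costs at most `μ` more. -/
lemma dF_le_of_isWalk_subCurve [PseudoMetricSpace X] {P Q : ℕ → X} {n m : ℕ}
    {μ r : ℝ} {S : List ℕ} {F : List (ℕ × ℕ)} (hS : IsSimplification dist P n μ S)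
    (hμ : 0 ≤ μ) (hF : IsWalk S.length m F)
    (hr : ∀ a ∈ F, dist (subCurve P S a.1) (Q a.2) ≤ r) :
    dF dist P n Q m ≤ r + μ := by
  have hmono := fun i => hS.getD_lt_getD_succ (i := i)
  have hlift := isWalk_liftWalk hmono hS.getD_zero hS.getD_length_sub_one
    (fun _ => hS.getD_lt) hF
  obtain ⟨hne, -, -, hchain, hbound⟩ := hF
  obtain ⟨a₀, ha₀⟩ := List.exists_mem_of_ne_nil F hne
  have hr₀ : 0 ≤ r + μ := by linarith [dist_nonneg.trans (hr a₀ ha₀)]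
  refine (dF_le_walkCost _ _ _ hlift).trans (walkCost_le _ _ _ hr₀ fun q hq => ?_)
  obtain ⟨a, ha, h2, h1⟩ := exists_of_mem_liftWalk hmono hchain (fun p hp => (hbound p hp).1) hq
  have hnear : dist (P (S.getD a.1 0)) (P q.1) ≤ μ := by
    rcases h1 with h1 | ⟨hi, hlt, hgt⟩
    · simpa [h1] using hμ
    · exact hS.dist_le hi hlt hgt
  calc dist (P q.1) (Q q.2)
      ≤ dist (P (S.getD a.1 0)) (P q.1) + dist (P (S.getD a.1 0)) (Q a.2) :=
        h2 ▸ dist_triangle_left _ _ _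
    _ ≤ r + μ := by linarith [show dist (P (S.getD a.1 0)) (Q a.2) ≤ r from hr a ha]

theorem decision_yes_general {X : Type*} [MetricSpace X] (d' : X → X → ℝ)
    (ε ρ ρstar μ : ℝ) (hε0 : 0 < ε) (hε1 : ε < 1) (hρ : 0 < ρ)
    (hρstar : ρstar = (1 + ε / 2) * ρ) (hμ0 : 0 ≤ μ) (hμ : μ ≤ ε * ρ / 6)
    (hd : ∀ x y, (1 - ε / 6) * dist x y ≤ d' x y ∧ d' x y ≤ (1 + ε / 6) * dist x y)
    (P : ℕ → X) (n : ℕ)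
    (Q : ℕ → X) (m : ℕ) (hm : 0 < m)
    (S : List ℕ) (hS : IsSimplification dist P n μ S)
    (h : dF d' (subCurve P S) S.length Q m ≤ ρstar) :
    dF dist P n Q m ≤ (1 + ε) * ρ := by
  have hshrink : 0 < 1 - ε / 6 := by linarith
  have hgap : ρstar < (1 - ε / 6) * ((1 + ε) * ρ - μ) := by
    rw [hρstar]
    nlinarith [mul_pos hε0 hρ]
  obtain ⟨F, hF, hcost⟩ := exists_isWalk_walkCost_lt_of_dF_lt
    (List.length_pos_iff.2 hS.ne_nil) hm (h.trans_lt hgap)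
  have hmatch : ∀ a ∈ F, dist (subCurve P S a.1) (Q a.2) ≤ (1 + ε) * ρ - μ := fun a ha => by
    have hperceived : (1 - ε / 6) * dist (subCurve P S a.1) (Q a.2) <
        (1 - ε / 6) * ((1 + ε) * ρ - μ) :=
      ((hd _ _).1.trans (le_walkCost d' _ Q ha)).trans_lt hcost
    exact (lt_of_mul_lt_mul_left hperceived hshrink.le).le
  simpa using dF_le_of_isWalk_subCurve hS hμ0 hF hmatch

/-- if the perceived discrete Fréchet distance between the
`μ`-simplification `P^μ` and `Q` is at most `ρ* = (1+ε/2)ρ` (with `μ ≤ ερ/6` and a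
`(1 ± ε/6)`-perceived distance `d'`), then `D_F(P, Q) ≤ (1+ε)ρ`. -/
theorem decision_yes {X : Type*} [MetricSpace X] (d' : X → X → ℝ)
    (ε ρ ρstar μ : ℝ) (hε0 : 0 < ε) (hε1 : ε < 1) (hρ : 0 < ρ)
    (hρstar : ρstar = (1 + ε / 2) * ρ) (hμ0 : 0 ≤ μ) (hμ : μ ≤ ε * ρ / 6)
    (hd : ∀ x y, (1 - ε / 6) * dist x y ≤ d' x y ∧ d' x y ≤ (1 + ε / 6) * dist x y)
    (P : ℕ → X) (n : ℕ) (hn : 0 < n)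
    (Q : ℕ → X) (m : ℕ) (hm : 0 < m)
    (S : List ℕ) (hS : IsSimplification dist P n μ S)
    (h : dF d' (subCurve P S) S.length Q m ≤ ρstar) :
    dF dist P n Q m ≤ (1 + ε) * ρ :=
  decision_yes_general d' ε ρ ρstar μ hε0 hε1 hρ hρstar hμ0 hμ hd P n Q m hm S hS h

end Frechet
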